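/- Higher differential variant rule (dV^k): Let f be globally Lipschitz on ℝⁿ, p polynomial, k ≥ 1, ε > 0. Write L⁰p = p and Lⁱ⁺¹p = ∇(Lⁱp)·f. If Lᵏp(y) ≥ ε whenever ¬(p(y) ≥ 0) (resp. ¬(p(y) > 0)), then every solution φ of x' = f(x) satisfies p(φ(τ)) ≥ 0 (resp. > 0) for some τ ≥ 0. -/

import Mathlib

/-!
Along a solution `φ` of `x' = F(x)`, the `i`-th Lie derivative `Lⁱp` evaluated at `φ t` is the
`i`-th time derivative of `g t = p (φ t)` (chain rule for polynomials). If `p (φ t)` stayed in the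
bad region for all `t ≥ 0`, then `g⁽ᵏ⁾ ≥ ε > 0` there, and integrating `k` times forces `g → ∞`,
so `g` eventually becomes positive: a contradiction.
-/

open MvPolynomial

/-- The Lie derivative of a polynomial `p` along a polynomial vector field `F`:
`L_F p = ∑ i, (∂p/∂xᵢ) · Fᵢ`. -/
noncomputable def polyLieDeriv {n : ℕ} (F : Fin n → MvPolynomial (Fin n) ℝ)
    (p : MvPolynomial (Fin n) ℝ) : MvPolynomial (Fin n) ℝ :=
  ∑ i : Fin n, pderiv i p * F i

open Filter

theorem MvPolynomial.hasDerivAt_eval_comp {σ : Type*} [Fintype σ] [DecidableEq σ]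
    {φ : ℝ → σ → ℝ} {φ' : σ → ℝ} {t : ℝ} (hφ : HasDerivAt φ φ' t) (q : MvPolynomial σ ℝ) :
    HasDerivAt (fun s => eval (φ s) q) (∑ i, eval (φ t) (pderiv i q) * φ' i) t := by
  induction q using MvPolynomial.induction_on with
  | C a => simpa using hasDerivAt_const t a
  | add p q hp hq =>
    simp only [map_add]
    exact (hp.add hq).congr_deriv (by simp only [add_mul, Finset.sum_add_distrib])
  | mul_X p j hp =>
    simp only [map_mul, eval_X]
    refine (hp.mul (hasDerivAt_pi.mp hφ j)).congr_deriv ?_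
    simp only [pderiv_mul, pderiv_X, map_add, map_mul, eval_X, add_mul, Finset.sum_add_distrib]
    simp [Pi.single_apply, apply_ite, Finset.sum_mul, mul_right_comm, add_comm]

theorem eval_polyLieDeriv {n : ℕ} (F : Fin n → MvPolynomial (Fin n) ℝ) (y : Fin n → ℝ)
    (q : MvPolynomial (Fin n) ℝ) :
    eval y (polyLieDeriv F q) = ∑ i, eval y (pderiv i q) * eval y (F i) := by
  simp [polyLieDeriv]

theorem hasDerivAt_eval_polyLieDeriv {n : ℕ} {F : Fin n → MvPolynomial (Fin n) ℝ}
    {φ : ℝ → Fin n → ℝ} {t : ℝ} (hφ : HasDerivAt φ (fun i => eval (φ t) (F i)) t)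
    (q : MvPolynomial (Fin n) ℝ) :
    HasDerivAt (fun s => eval (φ s) q) (eval (φ t) (polyLieDeriv F q)) t := by
  simpa only [eval_polyLieDeriv] using hasDerivAt_eval_comp hφ q

theorem tendsto_atTop_of_hasDerivAt_ge {g g' : ℝ → ℝ} {a c : ℝ} (hc : 0 < c)
    (hg : ∀ t, a ≤ t → HasDerivAt g (g' t) t) (hg' : ∀ t, a ≤ t → c ≤ g' t) :
    Tendsto g atTop atTop := by
  have linear_growth : ∀ t, a ≤ t → g a + c * (t - a) ≤ g t := by
    intro t ht
    have := (convex_Ici a).mul_sub_le_image_sub_of_le_deriv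
      (fun s hs => (hg s hs).continuousAt.continuousWithinAt)
      (fun s hs => (hg s (interior_subset hs)).differentiableAt.differentiableWithinAt)
      (fun s hs => (hg s (interior_subset hs)).deriv ▸ hg' s (interior_subset hs))
      a Set.self_mem_Ici t ht ht
    linarith
  refine tendsto_atTop_mono' atTop ((eventually_ge_atTop a).mono linear_growth) ?_
  exact tendsto_atTop_add_const_left _ _
    ((tendsto_atTop_add_const_right atTop (-a) tendsto_id).const_mul_atTop hc)

theorem tendsto_atTop_of_hasDerivAt_tendsto_atTop {g g' : ℝ → ℝ} {a : ℝ}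
    (hg : ∀ t, a ≤ t → HasDerivAt g (g' t) t) (hg' : Tendsto g' atTop atTop) :
    Tendsto g atTop atTop := by
  obtain ⟨T, hT⟩ := eventually_atTop.mp (hg'.eventually_ge_atTop 1)
  exact tendsto_atTop_of_hasDerivAt_ge one_pos
    (fun t ht => hg t ((le_max_left a T).trans ht))
    (fun t ht => hT t ((le_max_right a T).trans ht))

theorem tendsto_atTop_of_iterate_hasDerivAt_ge {g : ℕ → ℝ → ℝ} {a ε : ℝ} (hε : 0 < ε)
    (hg : ∀ i t, a ≤ t → HasDerivAt (g i) (g (i + 1) t) t) (k : ℕ)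
    (hgk : ∀ t, a ≤ t → ε ≤ g (k + 1) t) :
    Tendsto (g 0) atTop atTop := by
  induction k generalizing g with
  | zero => exact tendsto_atTop_of_hasDerivAt_ge hε (hg 0) hgk
  | succ k ih =>
    exact tendsto_atTop_of_hasDerivAt_tendsto_atTop (hg 0)
      (ih (g := fun i => g (i + 1)) (fun i => hg (i + 1)) hgk)

theorem eventually_pos_of_iterate_hasDerivAt_ge {g : ℕ → ℝ → ℝ} {a ε : ℝ} (hε : 0 < ε)
    (hg : ∀ i t, a ≤ t → HasDerivAt (g i) (g (i + 1) t) t) (k : ℕ)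
    (hgk : ∀ t, a ≤ t → ε ≤ g k t) :
    ∀ᶠ t in atTop, 0 < g 0 t := by
  cases k with
  | zero => exact (eventually_ge_atTop a).mono fun t ht => hε.trans_le (hgk t ht)
  | succ k => exact (tendsto_atTop_of_iterate_hasDerivAt_ge hε hg k hgk).eventually_gt_atTop 0

theorem exists_pos_eval_of_iterate_polyLieDeriv_ge {n : ℕ} {F : Fin n → MvPolynomial (Fin n) ℝ}
    {φ : ℝ → Fin n → ℝ} (hφ : ∀ t, 0 ≤ t → HasDerivAt φ (fun i => eval (φ t) (F i)) t)
    {p : MvPolynomial (Fin n) ℝ} {k : ℕ} {ε : ℝ} (hε : 0 < ε)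
    (hpk : ∀ t, 0 ≤ t → ε ≤ eval (φ t) ((polyLieDeriv F)^[k] p)) :
    ∃ τ, 0 ≤ τ ∧ 0 < eval (φ τ) p := by
  have hg (i : ℕ) (t : ℝ) (ht : 0 ≤ t) : HasDerivAt (fun s => eval (φ s) ((polyLieDeriv F)^[i] p))
      (eval (φ t) ((polyLieDeriv F)^[i + 1] p)) t := by
    rw [Function.iterate_succ_apply']
    exact hasDerivAt_eval_polyLieDeriv (hφ t ht) _
  exact ((eventually_ge_atTop 0).and (eventually_pos_of_iterate_hasDerivAt_ge hε hg k hpk)).exists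

theorem dV_higher_general (n : ℕ) (F : Fin n → MvPolynomial (Fin n) ℝ)
    (f : (Fin n → ℝ) → (Fin n → ℝ)) (hfF : f = fun x i => eval x (F i))
    (p : MvPolynomial (Fin n) ℝ) (k : ℕ) (ε : ℝ) (hε : 0 < ε)
    (φ : ℝ → (Fin n → ℝ)) (hsol : ∀ t : ℝ, 0 ≤ t → HasDerivAt φ (f (φ t)) t) :
    ((∀ y : Fin n → ℝ, ¬ (0 ≤ eval y p) →
        ε ≤ eval y ((polyLieDeriv F)^[k] p)) →
      ∃ τ : ℝ, 0 ≤ τ ∧ 0 ≤ eval (φ τ) p) ∧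
    ((∀ y : Fin n → ℝ, ¬ (0 < eval y p) →
        ε ≤ eval y ((polyLieDeriv F)^[k] p)) →
      ∃ τ : ℝ, 0 ≤ τ ∧ 0 < eval (φ τ) p) := by
  subst hfF
  refine ⟨fun hyp => ?_, fun hyp => ?_⟩
  · by_contra! hneg
    obtain ⟨τ, hτ, hpos⟩ := exists_pos_eval_of_iterate_polyLieDeriv_ge hsol hε
      fun t ht => hyp _ (hneg t ht).not_ge
    exact (hneg τ hτ).not_gt hpos
  · by_contra! hnonpos
    obtain ⟨τ, hτ, hpos⟩ := exists_pos_eval_of_iterate_polyLieDeriv_ge hsol hε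
      fun t ht => hyp _ (hnonpos t ht).not_gt
    exact (hnonpos τ hτ).not_gt hpos

/-- Higher differential variant rule dV^k: if the `k`-th Lie derivative of `p`
along the globally Lipschitz polynomial vector field `f` is at least `ε > 0`
wherever `¬(p ≥ 0)` (resp. `¬(p > 0)`), then along every (globally existing)
solution `p` eventually becomes `≥ 0` (resp. `> 0`). -/
theorem dV_higher (n : ℕ) (F : Fin n → MvPolynomial (Fin n) ℝ)
    (f : (Fin n → ℝ) → (Fin n → ℝ)) (hfF : f = fun x i => eval x (F i))
    (K : NNReal) (hf : LipschitzWith K f)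
    (p : MvPolynomial (Fin n) ℝ) (k : ℕ) (hk : 1 ≤ k) (ε : ℝ) (hε : 0 < ε)
    (φ : ℝ → (Fin n → ℝ)) (hsol : ∀ t : ℝ, 0 ≤ t → HasDerivAt φ (f (φ t)) t) :
    ((∀ y : Fin n → ℝ, ¬ (0 ≤ eval y p) →
        ε ≤ eval y ((polyLieDeriv F)^[k] p)) →
      ∃ τ : ℝ, 0 ≤ τ ∧ 0 ≤ eval (φ τ) p) ∧
    ((∀ y : Fin n → ℝ, ¬ (0 < eval y p) →
        ε ≤ eval y ((polyLieDeriv F)^[k] p)) →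
      ∃ τ : ℝ, 0 ≤ τ ∧ 0 < eval (φ τ) p) :=
  dV_higher_general n F f hfF p k ε hε φ hsol
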